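/- Let $H$ be a symmetric $d\times d$ real matrix and let $v_1,\dots,v_k$ satisfy $\langle v_i, v_j\rangle = \delta_{ij}$. If $\dot v_i = \gamma\big(-H v_i + \sum_{j=1}^i \xi_j^{(i)} v_j\big)$ with $\gamma > 0$, and the multipliers are chosen as $\xi_i^{(i)} = \langle v_i, H v_i\rangle$ and $\xi_j^{(i)} = 2\langle v_j, H v_i\rangle$ for $j < i$, then $\langle \dot v_i, v_j\rangle + \langle v_i, \dot v_j\rangle = 0$ for all $1 \le j \le i \le k$. That is, this choice of Lagrange multipliers preserves the orthonormality constraints to first order. -/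
import Mathlib


open Matrix

theorem stmt_4 (d k : ℕ) (H : Matrix (Fin d) (Fin d) ℝ) (hH : H.IsSymm)
    (γ : ℝ) (hγ : 0 < γ)
    (v : Fin k → Fin d → ℝ)
    (hv : ∀ i j, v i ⬝ᵥ v j = if i = j then (1 : ℝ) else 0)
    (ξ : Fin k → Fin k → ℝ)
    (hξdiag : ∀ i, ξ i i = v i ⬝ᵥ H.mulVec (v i))
    (hξoff : ∀ i j, j < i → ξ i j = 2 * (v j ⬝ᵥ H.mulVec (v i)))
    (vdot : Fin k → Fin d → ℝ)
    (hvdot : ∀ i, vdot i = γ • (-(H.mulVec (v i)) + ∑ j ∈ Finset.Iic i, ξ i j • v j)) :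
    ∀ i j, j ≤ i → vdot i ⬝ᵥ v j + v i ⬝ᵥ vdot j = 0 := by
  have hsym : ∀ a b : Fin d → ℝ, a ⬝ᵥ H.mulVec b = b ⬝ᵥ H.mulVec a := by
    intro a b
    rw [Matrix.dotProduct_mulVec, ← Matrix.mulVec_transpose, hH.eq,
      dotProduct_comm]
  have hsumdp : ∀ (s : Finset (Fin k)) (f : Fin k → Fin d → ℝ) (w : Fin d → ℝ),
      (∑ l ∈ s, f l) ⬝ᵥ w = ∑ l ∈ s, f l ⬝ᵥ w := by
    intro s f w
    simp only [dotProduct, Finset.sum_apply, Finset.sum_mul]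
    exact Finset.sum_comm
  have hdvsum : ∀ (i j : Fin k), j ≤ i → vdot i ⬝ᵥ v j
      = γ * (-(v j ⬝ᵥ H.mulVec (v i)) + ξ i j) := by
    intro i j hle
    rw [hvdot]
    rw [smul_dotProduct, add_dotProduct, neg_dotProduct,
      hsumdp]
    rw [smul_eq_mul]
    congr 2
    · rw [dotProduct_comm]
    · have : ∀ l ∈ Finset.Iic i, (ξ i l • v l) ⬝ᵥ v j
          = if l = j then ξ i j else 0 := by
        intro l _
        rw [smul_dotProduct, hv]
        split <;> simp_all
      rw [Finset.sum_congr rfl this, Finset.sum_ite_eq' (Finset.Iic i) j,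
        if_pos (Finset.mem_Iic.mpr hle)]
  intro i j hle
  have h2 : v i ⬝ᵥ vdot j = vdot j ⬝ᵥ v i := dotProduct_comm _ _
  rcases eq_or_lt_of_le hle with rfl | hlt
  · rw [h2, hdvsum _ _ le_rfl, hξdiag, hsym]
    ring
  · rw [h2, hdvsum i j hle, hξoff i j hlt]
    -- compute vdot j ⬝ᵥ v i where j < i : the sum term vanishes
    rw [hvdot]
    rw [smul_dotProduct, add_dotProduct, neg_dotProduct,
      hsumdp]
    have hz : ∑ l ∈ Finset.Iic j, (ξ j l • v l) ⬝ᵥ v i = 0 := by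
      apply Finset.sum_eq_zero
      intro l hl
      rw [smul_dotProduct, hv]
      have : l ≠ i := fun h => absurd (h ▸ Finset.mem_Iic.mp hl) (not_le.mpr hlt)
      simp [this]
    rw [hz, dotProduct_comm (H.mulVec (v j)), hsym (v i) (v j)]
    simp only [smul_eq_mul]
    ring
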